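/- arXiv:1301.3243 — 2 statements merged into one kernel-verified Lean document; each statement's English description precedes it below -/
import Mathlib

section
/- For a > 0, b > 0, σ > 0 and 1 < α < 2, the Laplace transform L(λ) = exp{ -∫₀^λ α a dz / (α b + σ^α z^{α-1}) } admits the expansion L(λ) = 1 - (a/b)λ + (a σ^α / (α² b²)) λ^α + o(λ^α) as λ → 0+. -/
open Real Filter Asymptotics Topology

/-!
With `I(λ) = ∫₀^λ A / (B + C z^(α-1))`, `A = αa`, `B = αb`, `C = σ^α`, we have `L = exp (-I)`.
Expanding the integrand to first order in `u = C z^(α-1)` leaves an error of order `u²`, so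
`I(λ) = (a/b) λ - a σ^α / (α² b²) λ^α + O(λ^(2α-1))`, while `exp (-I) = 1 - I + O(I²)` with
`I = O(λ)`. Both error terms `λ^(2α-1)` and `λ²` are `o(λ^α)` precisely because `1 < α < 2`.
-/

lemma isLittleO_rpow_rpow_nhdsGT_zero {p q : ℝ} (hqp : q < p) :
    (fun x : ℝ => x ^ p) =o[𝓝[>] 0] (fun x => x ^ q) := by
  have hpow : Tendsto (fun x : ℝ => x ^ (p - q)) (𝓝[>] 0) (𝓝 0) := by
    simpa [zero_rpow (sub_pos.2 hqp).ne'] using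
      ((continuous_rpow_const (sub_pos.2 hqp).le).tendsto 0).mono_left nhdsWithin_le_nhds
  refine ((isBigO_refl (fun x : ℝ => x ^ q) _).mul_isLittleO
    ((isLittleO_one_iff ℝ).2 hpow)).congr' ?_ (by simp)
  filter_upwards [self_mem_nhdsWithin] with x hx
  rw [← rpow_add hx, add_sub_cancel]

lemma Asymptotics.IsBigO.exp_sub_one_sub {ι : Type*} {l : Filter ι} {f g : ι → ℝ}
    (hfg : f =O[l] g) (hg : Tendsto g l (𝓝 0)) :
    (fun i => exp (f i) - 1 - f i) =O[l] (fun i => g i ^ 2) := by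
  have h := (exp_sub_sum_range_isBigO_pow 2).comp_tendsto (hfg.trans_tendsto hg)
  simp only [Finset.sum_range_succ, Finset.sum_range_zero, Function.comp_def] at h
  norm_num [sub_add_eq_sub_sub] at h
  exact h.trans (hfg.pow 2)

lemma abs_div_add_sub_le {A B u : ℝ} (hA : 0 ≤ A) (hB : 0 < B) (hu : 0 ≤ u) :
    |A / (B + u) - (A / B - A / B ^ 2 * u)| ≤ A / B ^ 3 * u ^ 2 := by
  have hremainder : A / (B + u) - (A / B - A / B ^ 2 * u) = A * u ^ 2 / (B ^ 2 * (B + u)) := by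
    field_simp
    ring
  rw [hremainder, abs_of_nonneg (by positivity), div_mul_eq_mul_div, pow_succ' B 2, mul_comm B]
  gcongr
  linarith

section IntegralDivAddRpow

variable {A B C p x : ℝ}

lemma abs_integral_div_add_rpow_le (hA : 0 ≤ A) (hB : 0 < B) (hC : 0 ≤ C) (hx : 0 ≤ x) :
    |∫ z in (0:ℝ)..x, A / (B + C * z ^ (p - 1))| ≤ A / B * x := by
  have h := intervalIntegral.norm_integral_le_of_norm_le_const
    (f := fun z => A / (B + C * z ^ (p - 1))) (C := A / B) (a := 0) (b := x) fun z hz => by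
      rw [Set.uIoc_of_le hx] at hz
      have hu : 0 ≤ C * z ^ (p - 1) := mul_nonneg hC (rpow_nonneg hz.1.le _)
      rw [Real.norm_eq_abs, abs_of_nonneg (by positivity)]
      gcongr
      linarith
  simpa [abs_of_nonneg hx] using h


lemma integral_const_sub_mul_rpow (hp : 0 < p) :
    ∫ z in (0:ℝ)..x, (A / B - A * C / B ^ 2 * z ^ (p - 1))
      = A / B * x - A * C / (B ^ 2 * p) * x ^ p := by
  have hint : IntervalIntegrable (fun z : ℝ => z ^ (p - 1)) MeasureTheory.volume 0 x :=
    intervalIntegral.intervalIntegrable_rpow' (by linarith)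
  rw [intervalIntegral.integral_sub intervalIntegrable_const (hint.const_mul _),
    intervalIntegral.integral_const, intervalIntegral.integral_const_mul,
    integral_rpow (Or.inl (by linarith)), sub_add_cancel, zero_rpow hp.ne', smul_eq_mul]
  ring

lemma integral_mul_rpow_two_mul_sub_two (hp : 1 / 2 < p) :
    ∫ z in (0:ℝ)..x, C * z ^ (2 * p - 2) = C / (2 * p - 1) * x ^ (2 * p - 1) := by
  rw [intervalIntegral.integral_const_mul, integral_rpow (Or.inl (by linarith)),
    show 2 * p - 2 + 1 = 2 * p - 1 by ring, zero_rpow (by linarith)]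
  ring

lemma abs_integral_div_add_rpow_sub_le (hA : 0 ≤ A) (hB : 0 < B) (hC : 0 ≤ C) (hp : 1 ≤ p)
    (hx : 0 ≤ x) :
    |(∫ z in (0:ℝ)..x, A / (B + C * z ^ (p - 1))) - (A / B * x - A * C / (B ^ 2 * p) * x ^ p)|
      ≤ A * C ^ 2 / (B ^ 3 * (2 * p - 1)) * x ^ (2 * p - 1) := by
  have hcont : Continuous fun z : ℝ => z ^ (p - 1) := continuous_rpow_const (by linarith)
  have hint : IntervalIntegrable (fun z => A / (B + C * z ^ (p - 1))) MeasureTheory.volume 0 x := by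
    refine (continuousOn_const.div (continuous_const.add (hcont.const_mul C)).continuousOn
      fun z hz => ?_).intervalIntegrable
    rw [Set.uIcc_of_le hx] at hz
    exact (add_pos_of_pos_of_nonneg hB (mul_nonneg hC (rpow_nonneg hz.1 _))).ne'
  rw [← integral_const_sub_mul_rpow (by linarith),
    ← intervalIntegral.integral_sub hint (intervalIntegrable_const.sub
      ((hcont.const_mul _).intervalIntegrable 0 x)),
    ← div_div, ← integral_mul_rpow_two_mul_sub_two (by linarith), ← Real.norm_eq_abs]
  refine intervalIntegral.norm_integral_le_of_norm_le hx (.of_forall fun z hz => ?_)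
    (((continuous_rpow_const (by linarith)).const_mul _).intervalIntegrable 0 x)
  have hsq : (z ^ (p - 1)) ^ 2 = z ^ (2 * p - 2) := by
    rw [← rpow_mul_natCast hz.1.le]
    ring_nf
  calc ‖_‖ = |A / (B + C * z ^ (p - 1)) - (A / B - A / B ^ 2 * (C * z ^ (p - 1)))| := by
        rw [Real.norm_eq_abs]; ring_nf
    _ ≤ A / B ^ 3 * (C * z ^ (p - 1)) ^ 2 :=
        abs_div_add_sub_le hA hB (mul_nonneg hC (rpow_nonneg hz.1.le _))
    _ = _ := by rw [mul_pow, hsq]; ring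

end IntegralDivAddRpow

theorem stmt5 (a b σ α : ℝ) (ha : 0 < a) (hb : 0 < b) (hσ : 0 < σ)
    (hα1 : 1 < α) (hα2 : α < 2)
    (L : ℝ → ℝ)
    (hL : ∀ lam, L lam =
      Real.exp (-∫ z in (0:ℝ)..lam, α * a / (α * b + σ ^ α * z ^ (α - 1)))) :
    (fun lam => L lam - (1 - (a / b) * lam + (a * σ ^ α / (α ^ 2 * b ^ 2)) * lam ^ α))
      =o[nhdsWithin 0 (Set.Ioi 0)] (fun lam => lam ^ α) := by
  set I : ℝ → ℝ := fun lam => ∫ z in (0:ℝ)..lam, α * a / (α * b + σ ^ α * z ^ (α - 1))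
  have hA : 0 ≤ α * a := by positivity
  have hB : 0 < α * b := by positivity
  have hC : 0 ≤ σ ^ α := by positivity
  have hpos : ∀ᶠ lam in 𝓝[>] (0:ℝ), 0 ≤ lam := eventually_mem_nhdsWithin.mono fun _ h => le_of_lt h
  have hI_lin : I =O[𝓝[>] 0] id := IsBigO.of_bound (α * a / (α * b)) <| hpos.mono fun lam h => by
    simpa [abs_of_nonneg h] using abs_integral_div_add_rpow_le hA hB hC h
  have hI_sub : (fun lam => I lam - (a / b * lam - a * σ ^ α / (α ^ 2 * b ^ 2) * lam ^ α))
      =O[𝓝[>] 0] (fun lam => lam ^ (2 * α - 1)) := IsBigO.of_bound _ <| hpos.mono fun lam hlam => by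
    have h := abs_integral_div_add_rpow_sub_le hA hB hC hα1.le hlam
    rw [show α * a / (α * b) = a / b by field_simp,
      show α * a * σ ^ α / ((α * b) ^ 2 * α) = a * σ ^ α / (α ^ 2 * b ^ 2) by field_simp] at h
    rw [Real.norm_eq_abs, Real.norm_eq_abs, abs_of_nonneg (rpow_nonneg hlam _)]
    exact h
  have hexp : (fun lam => exp (-I lam) - 1 - -I lam) =O[𝓝[>] 0] (fun lam : ℝ => lam ^ 2) :=
    hI_lin.neg_left.exp_sub_one_sub (tendsto_id.mono_left nhdsWithin_le_nhds)
  have hdecomp : (fun lam => L lam - (1 - (a / b) * lam + (a * σ ^ α / (α ^ 2 * b ^ 2)) * lam ^ α))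
      = fun lam => (exp (-I lam) - 1 - -I lam)
        - (I lam - (a / b * lam - a * σ ^ α / (α ^ 2 * b ^ 2) * lam ^ α)) := by
    ext lam
    rw [hL]
    ring
  rw [hdecomp]
  refine (hexp.trans_isLittleO ?_).sub (hI_sub.trans_isLittleO ?_)
  · simpa only [rpow_two] using isLittleO_rpow_rpow_nhdsGT_zero hα2
  · exact isLittleO_rpow_rpow_nhdsGT_zero (by linarith)
end

section
/- Suppose a transition semigroup (P_t) on [0,∞) satisfies |P_t f(x) - P_t f(y)| ≤ 2‖f‖_∞ (1 - e^{-v̄_t |x-y|}) for all bounded measurable f, where v̄_t > 0, and μ is an invariant probability measure on [0,∞) with Laplace transform L_μ satisfying 1 - L_μ(λ) ≤ (a/b)λ. Then for every x ≥ 0 and t ≥ 0, ‖P_t(x,·) - μ‖_var ≤ 2(1 - e^{-v̄_t x}) + 2 (a/b) v̄_t. -/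
/-!
Invariance of `μ` turns `P_t f(x) - μ(f)` into `∫ (P_t f(x) - P_t f(y)) μ(dy)`. On `[0, ∞)` the
contraction bound `1 - e^{-v|x-y|} ≤ (1 - e^{-vx}) + (1 - e^{-vy})` bounds the integrand by a term
in `x` alone plus `1 - e^{-vy}`, whose `μ`-integral is `1 - L_μ(v) ≤ (a/b) v`.
-/

open MeasureTheory Real Set

lemma one_sub_exp_neg_mul_abs_sub_le {v x y : ℝ} (hv : 0 ≤ v) (hx : 0 ≤ x) (hy : 0 ≤ y) :
    1 - exp (-v * |x - y|) ≤ (1 - exp (-v * x)) + (1 - exp (-v * y)) := by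
  have hprod : exp (-v * x) * exp (-v * y) ≤ exp (-v * |x - y|) := by
    rw [← exp_add, exp_le_exp]
    have : |x - y| ≤ x + y := abs_le.mpr ⟨by linarith, by linarith⟩
    nlinarith
  have hx1 : exp (-v * x) ≤ 1 := exp_le_one_iff.mpr (by nlinarith)
  have hy1 : exp (-v * y) ≤ 1 := exp_le_one_iff.mpr (by nlinarith)
  nlinarith

lemma integrable_exp_neg_mul_of_ae_nonneg {μ : Measure ℝ} [IsFiniteMeasure μ]
    (hμ : ∀ᵐ z ∂μ, 0 ≤ z) {v : ℝ} (hv : 0 ≤ v) :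
    Integrable (fun z => exp (-v * z)) μ := by
  refine Integrable.mono' (integrable_const 1) (by fun_prop) ?_
  filter_upwards [hμ] with z hz
  rw [norm_of_nonneg (exp_pos _).le, exp_le_one_iff]
  nlinarith

section ExpContraction

variable {g : ℝ → ℝ} {c v : ℝ}

lemma lipschitzOnWith_of_exp_contraction (hc : 0 ≤ c) (hv : 0 ≤ v)
    (hg : ∀ x ≥ 0, ∀ y ≥ 0, |g x - g y| ≤ c * (1 - exp (-v * |x - y|))) :
    LipschitzOnWith (c * v).toNNReal g (Ici 0) := by
  refine LipschitzOnWith.of_dist_le_mul fun x hx y hy => ?_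
  rw [Real.dist_eq, Real.dist_eq, Real.coe_toNNReal _ (mul_nonneg hc hv)]
  calc |g x - g y| ≤ c * (1 - exp (-v * |x - y|)) := hg x hx y hy
    _ ≤ c * (v * |x - y|) := by
        gcongr
        linarith [add_one_le_exp (-v * |x - y|)]
    _ = c * v * |x - y| := by ring

lemma integrable_of_exp_contraction {μ : Measure ℝ} [IsFiniteMeasure μ] (hμ : ∀ᵐ z ∂μ, 0 ≤ z)
    (hc : 0 ≤ c) (hv : 0 ≤ v)
    (hg : ∀ x ≥ 0, ∀ y ≥ 0, |g x - g y| ≤ c * (1 - exp (-v * |x - y|))) :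
    Integrable g μ := by
  have hmeas : AEStronglyMeasurable g μ := by
    rw [← Measure.restrict_eq_self_of_ae_mem (s := Ici 0) hμ]
    exact (lipschitzOnWith_of_exp_contraction hc hv hg).continuousOn.aestronglyMeasurable
      measurableSet_Ici
  refine Integrable.mono' (integrable_const (|g 0| + c)) hmeas ?_
  filter_upwards [hμ] with y hy
  have hosc : |g y - g 0| ≤ c :=
    (hg y hy 0 le_rfl).trans (mul_le_of_le_one_right hc (by linarith [exp_pos (-v * |y - 0|)]))
  rw [Real.norm_eq_abs]
  linarith [abs_sub_abs_le_abs_sub (g y) (g 0)]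

theorem abs_sub_integral_le_of_exp_contraction {μ : Measure ℝ} [IsProbabilityMeasure μ]
    (hμ : ∀ᵐ z ∂μ, 0 ≤ z) (hc : 0 ≤ c) (hv : 0 ≤ v)
    (hg : ∀ x ≥ 0, ∀ y ≥ 0, |g x - g y| ≤ c * (1 - exp (-v * |x - y|))) {x : ℝ} (hx : 0 ≤ x) :
    |g x - ∫ y, g y ∂μ| ≤ c * (1 - exp (-v * x)) + c * (1 - ∫ y, exp (-v * y) ∂μ) := by
  have hgi := integrable_of_exp_contraction hμ hc hv hg
  have hexpi := integrable_exp_neg_mul_of_ae_nonneg hμ hv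
  have hdefecti : Integrable (fun y => c * (1 - exp (-v * y))) μ :=
    ((integrable_const 1).sub hexpi).const_mul c
  have hboundi : Integrable (fun y => c * (1 - exp (-v * x)) + c * (1 - exp (-v * y))) μ :=
    (integrable_const _).add hdefecti
  calc |g x - ∫ y, g y ∂μ| = |∫ y, (g x - g y) ∂μ| := by
        rw [integral_sub (integrable_const _) hgi, integral_const, probReal_univ, one_smul]
    _ ≤ ∫ y, |g x - g y| ∂μ := abs_integral_le_integral_abs
    _ ≤ ∫ y, (c * (1 - exp (-v * x)) + c * (1 - exp (-v * y))) ∂μ := by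
        refine integral_mono_ae ((integrable_const _).sub hgi).abs hboundi ?_
        filter_upwards [hμ] with y hy
        calc |g x - g y| ≤ c * (1 - exp (-v * |x - y|)) := hg x hx y hy
          _ ≤ c * ((1 - exp (-v * x)) + (1 - exp (-v * y))) :=
              mul_le_mul_of_nonneg_left (one_sub_exp_neg_mul_abs_sub_le hv hx hy) hc
          _ = _ := mul_add _ _ _
    _ = c * (1 - exp (-v * x)) + c * (1 - ∫ y, exp (-v * y) ∂μ) := by
        rw [integral_add (integrable_const _) hdefecti, integral_const, integral_const_mul,
          integral_sub (integrable_const 1) hexpi, integral_const]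
        simp

end ExpContraction

theorem stmt7_general (a b : ℝ)
    (vbar : ℝ → ℝ) (hv : ∀ t, 0 < vbar t)
    (P : ℝ → ℝ → Measure ℝ)
    (hcontract : ∀ t ≥ (0:ℝ), ∀ x ≥ (0:ℝ), ∀ y ≥ (0:ℝ), ∀ f : ℝ → ℝ, Measurable f →
      ∀ C : ℝ, (∀ z, |f z| ≤ C) →
      |(∫ z, f z ∂(P t x)) - ∫ z, f z ∂(P t y)|
        ≤ 2 * C * (1 - Real.exp (-vbar t * |x - y|)))
    (μ : Measure ℝ) [IsProbabilityMeasure μ]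
    (hsupp : ∀ᵐ z ∂μ, 0 ≤ z)
    (hinv : ∀ t ≥ (0:ℝ), ∀ f : ℝ → ℝ, Measurable f → (∀ z, |f z| ≤ 1) →
      ∫ x, (∫ z, f z ∂(P t x)) ∂μ = ∫ z, f z ∂μ)
    (hlap : ∀ lam ≥ (0:ℝ), 1 - ∫ z, Real.exp (-lam * z) ∂μ ≤ (a / b) * lam) :
    ∀ t ≥ (0:ℝ), ∀ x ≥ (0:ℝ), ∀ f : ℝ → ℝ, Measurable f → (∀ z, |f z| ≤ 1) →
      |(∫ z, f z ∂(P t x)) - ∫ z, f z ∂μ|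
        ≤ 2 * (1 - Real.exp (-vbar t * x)) + 2 * (a / b) * vbar t := by
  intro t ht x hx f hf hf1
  have hPf : ∀ y ≥ (0:ℝ), ∀ y' ≥ (0:ℝ), |(∫ z, f z ∂(P t y)) - ∫ z, f z ∂(P t y')|
      ≤ 2 * (1 - exp (-vbar t * |y - y'|)) := fun y hy y' hy' => by
    simpa using hcontract t ht y hy y' hy' f hf 1 hf1
  have key := abs_sub_integral_le_of_exp_contraction hsupp zero_le_two (hv t).le hPf hx
  rw [hinv t ht f hf hf1] at key
  linarith [hlap (vbar t) (hv t).le]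

theorem stmt7 (a b : ℝ) (ha : 0 < a) (hb : 0 < b)
    (vbar : ℝ → ℝ) (hv : ∀ t, 0 < vbar t)
    (P : ℝ → ℝ → Measure ℝ)
    (hprob : ∀ t x, IsProbabilityMeasure (P t x))
    (hcontract : ∀ t ≥ (0:ℝ), ∀ x ≥ (0:ℝ), ∀ y ≥ (0:ℝ), ∀ f : ℝ → ℝ, Measurable f →
      ∀ C : ℝ, (∀ z, |f z| ≤ C) →
      |(∫ z, f z ∂(P t x)) - ∫ z, f z ∂(P t y)|
        ≤ 2 * C * (1 - Real.exp (-vbar t * |x - y|)))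
    (μ : Measure ℝ) [IsProbabilityMeasure μ]
    (hsupp : ∀ᵐ z ∂μ, 0 ≤ z)
    (hinv : ∀ t ≥ (0:ℝ), ∀ f : ℝ → ℝ, Measurable f → (∀ z, |f z| ≤ 1) →
      ∫ x, (∫ z, f z ∂(P t x)) ∂μ = ∫ z, f z ∂μ)
    (hlap : ∀ lam ≥ (0:ℝ), 1 - ∫ z, Real.exp (-lam * z) ∂μ ≤ (a / b) * lam) :
    ∀ t ≥ (0:ℝ), ∀ x ≥ (0:ℝ), ∀ f : ℝ → ℝ, Measurable f → (∀ z, |f z| ≤ 1) →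
      |(∫ z, f z ∂(P t x)) - ∫ z, f z ∂μ|
        ≤ 2 * (1 - Real.exp (-vbar t * x)) + 2 * (a / b) * vbar t :=
  stmt7_general a b vbar hv P hcontract μ hsupp hinv hlap
end
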